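/- arXiv:cs/0009007 — 3 statements merged into one kernel-verified Lean document; each statement's English description precedes it below -/
import Mathlib

section
/- Let h: [a,b] → ℝ be the concave upper-boundary function of the ROC convex hull and m ≥ 0. A point x* ∈ [a,b] minimizes the expected cost g(x) = p_neg·c_FP·x − p_pos·c_FN·h(x) (which, up to an additive constant, equals ec(x, h(x))) if and only if m = (p_neg·c_FP)/(p_pos·c_FN) lies between the right derivative and the left derivative of h at x*, i.e., h'_+(x*) ≤ m ≤ h'_−(x*), with the conventions h'_−(a) = +∞ and h'_+(b) = 0. -/
/-- A point x on the concave upper hull boundary minimizes expected cost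
ec(x, h x) over [a,b] iff the iso-performance slope m = (c_FP·p_neg)/(c_FN·p_pos)
lies between the right and left derivatives of h at x (expressed via slopes:
all right slopes are ≤ m and all left slopes are ≥ m). -/
theorem stmt8 (a b : ℝ) (hab : a ≤ b) (h : ℝ → ℝ)
    (hconc : ConcaveOn ℝ (Set.Icc a b) h)
    (ppos pneg cFP cFN : ℝ) (hppos : 0 < ppos) (hpneg : 0 < pneg)
    (hsum : ppos + pneg = 1) (hcFP : 0 < cFP) (hcFN : 0 < cFN)
    (m : ℝ) (hm : m = (cFP * pneg) / (cFN * ppos))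
    (x : ℝ) (hx : x ∈ Set.Icc a b) :
    (∀ y ∈ Set.Icc a b,
        ppos * (1 - h x) * cFN + pneg * x * cFP
          ≤ ppos * (1 - h y) * cFN + pneg * y * cFP)
    ↔ ((∀ y ∈ Set.Icc a b, x < y → h y - h x ≤ m * (y - x)) ∧
       (∀ y ∈ Set.Icc a b, y < x → m * (x - y) ≤ h x - h y)) := by
  have hpos : (0:ℝ) < cFN * ppos := mul_pos hcFN hppos
  have key : ∀ y : ℝ,
      (ppos * (1 - h x) * cFN + pneg * x * cFP
          ≤ ppos * (1 - h y) * cFN + pneg * y * cFP)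
        ↔ cFN * ppos * (h y - h x) ≤ cFP * pneg * (y - x) := by
    intro y; constructor <;> intro hy <;> nlinarith [hy]
  have keym : ∀ t s : ℝ, (s ≤ m * t ↔ cFN * ppos * s ≤ cFP * pneg * t) := by
    intro t s
    rw [hm, div_mul_eq_mul_div, le_div_iff₀ hpos]
    constructor <;> intro hh <;> nlinarith [hh]
  constructor
  · intro H
    constructor
    · intro y hy hxy
      rw [keym]
      exact (key y).mp (H y hy)
    · intro y hy hyx
      have := (keym (y - x) (h y - h x)).mpr ((key y).mp (H y hy))
      nlinarith [this]
  · rintro ⟨H1, H2⟩ y hy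
    rw [key y]
    rcases lt_trichotomy x y with hlt | heq | hgt
    · exact (keym _ _).mp (H1 y hy hlt)
    · simp [heq]
    · have h2 := H2 y hy hgt
      have hmul : cFN * ppos * (m * (x - y)) = cFP * pneg * (x - y) := by
        rw [hm]; field_simp
      nlinarith [mul_le_mul_of_nonneg_left h2 hpos.le, hmul]
end

section
/- For any point q = (FP0, TP0) strictly below the upper boundary of the convex hull of S (i.e., TP0 < h(FP0)), and any slope m ≥ 0 with priors/costs giving iso-performance slope m, there exists a vertex v of conv(S) whose expected cost is strictly less than that of q. (The iso-performance line through q meets the hull boundary; an adjacent vertex lies on a line with strictly larger TP-intercept.) -/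
/-- Any point of the hull strictly below the upper boundary is strictly beaten
in expected cost by some vertex (extreme point) of the convex hull. -/
theorem stmt11 (S : Set (ℝ × ℝ)) (hfin : S.Finite) (hne : S.Nonempty)
    (hsub : S ⊆ Set.Icc (0:ℝ) 1 ×ˢ Set.Icc (0:ℝ) 1)
    (ppos pneg cFP cFN : ℝ) (hppos : 0 < ppos) (hpneg : 0 < pneg)
    (hsum : ppos + pneg = 1) (hcFP : 0 < cFP) (hcFN : 0 < cFN)
    (q : ℝ × ℝ) (hq : q ∈ convexHull ℝ S)
    (hbelow : q.2 < sSup {y | (q.1, y) ∈ convexHull ℝ S}) :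
    ∃ v ∈ Set.extremePoints ℝ (convexHull ℝ S),
      ppos * (1 - v.2) * cFN + pneg * v.1 * cFP
        < ppos * (1 - q.2) * cFN + pneg * q.1 * cFP := by
  set K := convexHull ℝ S with hK
  have hKbox : K ⊆ Set.Icc (0:ℝ) 1 ×ˢ Set.Icc (0:ℝ) 1 :=
    convexHull_min hsub ((convex_Icc _ _).prod (convex_Icc _ _))
  have hKclosed : IsClosed K := hfin.isClosed_convexHull (𝕜 := ℝ)
  set Y : Set ℝ := {y | (q.1, y) ∈ K} with hY
  have hYne : Y.Nonempty := ⟨q.2, hq⟩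
  have hYbdd : BddAbove Y := ⟨1, fun y hy => (hKbox hy).2.2⟩
  have hYclosed : IsClosed Y :=
    hKclosed.preimage (Continuous.prodMk_right q.1)
  set B := sSup Y with hB
  have hBmem : (q.1, B) ∈ K := hYclosed.csSup_mem hYne hYbdd
  -- extreme points
  set E := Set.extremePoints ℝ K with hE
  have hEsub : E ⊆ S := extremePoints_convexHull_subset
  have hEfin : E.Finite := hfin.subset hEsub
  have hKcomp : IsCompact K := hfin.isCompact_convexHull (𝕜 := ℝ)
  have hKconv : Convex ℝ K := convex_convexHull ℝ S
  have hKM : closure (convexHull ℝ E) = K := closure_convexHull_extremePoints hKcomp hKconv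
  have hEhull : convexHull ℝ E = K := by
    rw [← hKM]; exact ((hEfin.isClosed_convexHull (𝕜 := ℝ)).closure_eq).symm
  -- cost function
  set f : ℝ × ℝ → ℝ := fun v => ppos * (1 - v.2) * cFN + pneg * v.1 * cFP with hf
  have hconc : ConcaveOn ℝ Set.univ f := by
    constructor
    · exact convex_univ
    · intro x _ y _ a b _ _ hab
      simp only [hf, Prod.fst_add, Prod.snd_add, Prod.smul_fst, Prod.smul_snd, smul_eq_mul]
      have hb : b = 1 - a := by linarith
      subst hb
      apply le_of_eq; ring
  have hmem : (q.1, B) ∈ convexHull ℝ E := by rw [hEhull]; exact hBmem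
  obtain ⟨v, hvE, hvle⟩ := hconc.exists_le_of_mem_convexHull (Set.subset_univ E) hmem
  refine ⟨v, hvE, lt_of_le_of_lt hvle ?_⟩
  simp only [hf]
  nlinarith [mul_pos (mul_pos hppos hcFN) (sub_pos.mpr hbelow)]
end

section
/- Let h be the concave upper boundary of the ROC convex hull on [0,1] with h(0) ≥ 0, and suppose a vertical line FP = FP_max passes strictly between two adjacent vertices (x₁,h(x₁)) and (x₂,h(x₂)) of the hull (x₁ < FP_max < x₂) with h strictly increasing on [x₁,x₂]. Then h(FP_max) > h(x) for every vertex x ≤ FP_max; i.e., the interpolated hybrid classifier at FP = FP_max achieves a strictly higher TP than every component classifier satisfying the Neyman–Pearson constraint FP ≤ FP_max. -/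
/-- If FP_max lies strictly between two adjacent hull vertices x1 < x2 with the
hull boundary h strictly increasing on [x1,x2], then the interpolated hybrid at
FP_max beats every component classifier with FP ≤ FP_max (all of which have
FP ≤ x1): h(FP_max) > h(x) for all x ∈ [0, x1]. -/
theorem stmt16 (h : ℝ → ℝ) (hconc : ConcaveOn ℝ (Set.Icc (0:ℝ) 1) h)
    (hh0 : 0 ≤ h 0)
    (x1 x2 FPmax : ℝ) (h0 : 0 ≤ x1) (h1 : x1 < FPmax) (h2 : FPmax < x2)
    (h3 : x2 ≤ 1)
    (hmono : StrictMonoOn h (Set.Icc x1 x2)) :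
    ∀ x ∈ Set.Icc (0:ℝ) x1, h x < h FPmax := by
  intro x hx
  obtain ⟨hx0, hx1⟩ := hx
  have hx1m : x1 ∈ Set.Icc x1 x2 := ⟨le_refl _, by linarith⟩
  have hFm : FPmax ∈ Set.Icc x1 x2 := ⟨le_of_lt h1, le_of_lt h2⟩
  have key : h x1 < h FPmax := hmono hx1m hFm h1
  rcases eq_or_lt_of_le hx1 with rfl | hxlt
  · exact key
  · by_contra hle
    push_neg at hle
    set a : ℝ := (FPmax - x1) / (FPmax - x) with ha
    set b : ℝ := (x1 - x) / (FPmax - x) with hb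
    have hd : 0 < FPmax - x := by linarith
    have ha0 : 0 ≤ a := div_nonneg (by linarith) hd.le
    have hb0 : 0 ≤ b := div_nonneg (by linarith) hd.le
    have hab : a + b = 1 := by
      rw [ha, hb, ← add_div, div_eq_one_iff_eq hd.ne']; ring
    have hcomb : a • x + b • FPmax = x1 := by
      simp only [smul_eq_mul, ha, hb]
      field_simp
      ring
    have hxmem : x ∈ Set.Icc (0:ℝ) 1 := ⟨hx0, by linarith⟩
    have hFmem : FPmax ∈ Set.Icc (0:ℝ) 1 := ⟨by linarith, by linarith⟩
    have := hconc.2 hxmem hFmem ha0 hb0 hab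
    rw [hcomb] at this
    have : h FPmax ≤ h x1 := by
      calc h FPmax = a * h FPmax + b * h FPmax := by rw [← add_mul, hab, one_mul]
        _ ≤ a * h x + b * h FPmax := by nlinarith
        _ ≤ h x1 := by simpa [smul_eq_mul] using this
    linarith
end
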